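/- Uniqueness of the ergodic constant: suppose (u1, ρ1) and (u2, ρ2) are two pairs in C²([0,L]) × ℝ solving -ν u'' + H(x, u') + ρ = f(x) on [0,L] with Neumann conditions u'(0) = u'(L) = 0, where ν > 0 and H is continuous. Then ρ1 = ρ2. -/

import Mathlib

open Set Filter Topology

/-! At a maximum point `x₀` of `u₁ - u₂` on `[0, L]` the derivatives agree (in the interior
because `x₀` is a critical point, at an endpoint by the Neumann condition) and
`u₁''(x₀) ≤ u₂''(x₀)`. Subtracting the two equations at `x₀` cancels the Hamiltonian term
and leaves `ρ₁ - ρ₂ = ν (u₁''(x₀) - u₂''(x₀)) ≤ 0`; by symmetry `ρ₂ ≤ ρ₁` as well. -/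

theorem eventually_nhdsNE_lt_of_deriv_deriv_pos {w : ℝ → ℝ} {x₀ : ℝ}
    (hw : ∀ᶠ x in 𝓝 x₀, DifferentiableAt ℝ w x) (hd : deriv w x₀ = 0)
    (hdd : 0 < deriv (deriv w) x₀) :
    ∀ᶠ x in 𝓝[≠] x₀, w x₀ < w x := by
  obtain ⟨ε, hε, hball⟩ := Metric.eventually_nhds_iff_ball.mp
    (hw.and (eventually_nhdsWithin_sign_eq_of_deriv_pos hdd hd))
  have hIcc : ∀ {a b}, a ∈ Metric.ball x₀ ε → b ∈ Metric.ball x₀ ε →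
      Icc a b ⊆ Metric.ball x₀ ε := fun ha hb => (convex_ball x₀ ε).ordConnected.out ha hb
  have hmvt : ∀ {a b}, a < b → a ∈ Metric.ball x₀ ε → b ∈ Metric.ball x₀ ε →
      ∃ c ∈ Ioo a b, SignType.sign (deriv w c) = SignType.sign (c - x₀) ∧
        deriv w c = (w b - w a) / (b - a) := fun hab ha hb => by
    have hdiff : ∀ y ∈ Icc _ _, DifferentiableAt ℝ w y := fun y hy =>
      (hball y (hIcc ha hb hy)).1
    obtain ⟨c, hc, hslope⟩ := exists_deriv_eq_slope w hab
      (fun y hy => (hdiff y hy).continuousAt.continuousWithinAt)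
      (fun y hy => (hdiff y (Ioo_subset_Icc_self hy)).differentiableWithinAt)
    exact ⟨c, hc, (hball c (hIcc ha hb (Ioo_subset_Icc_self hc))).2, hslope⟩
  filter_upwards [nhdsWithin_le_nhds (Metric.ball_mem_nhds x₀ hε), self_mem_nhdsWithin]
    with x hx hne
  rcases (show x ≠ x₀ from hne).lt_or_gt with hlt | hgt
  · obtain ⟨c, hc, hsign, hslope⟩ := hmvt hlt hx (Metric.mem_ball_self hε)
    rw [sign_neg (sub_neg.mpr hc.2), sign_eq_neg_one_iff, hslope] at hsign
    linarith [(div_lt_iff₀ (sub_pos.mpr hlt)).mp hsign]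
  · obtain ⟨c, hc, hsign, hslope⟩ := hmvt hgt (Metric.mem_ball_self hε) hx
    rw [sign_pos (sub_pos.mpr hc.1), sign_eq_one_iff, hslope] at hsign
    linarith [(lt_div_iff₀ (sub_pos.mpr hgt)).mp hsign]

theorem deriv_deriv_nonpos_of_isMaxOn {w : ℝ → ℝ} {s : Set ℝ} {x₀ : ℝ}
    (hmax : IsMaxOn w s x₀) (hacc : AccPt x₀ (𝓟 s))
    (hw : ∀ᶠ x in 𝓝 x₀, DifferentiableAt ℝ w x) (hd : deriv w x₀ = 0) :
    deriv (deriv w) x₀ ≤ 0 := by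
  by_contra! hdd
  obtain ⟨x, hx, hlt⟩ := ((accPt_iff_frequently_nhdsNE.mp hacc).and_eventually
    (eventually_nhdsNE_lt_of_deriv_deriv_pos hw hd hdd)).exists
  exact absurd hlt (not_lt.mpr (hmax hx))

theorem deriv_eq_zero_of_isMaxOn_Icc {w : ℝ → ℝ} {a b x₀ : ℝ} (hx₀ : x₀ ∈ Icc a b)
    (hmax : IsMaxOn w (Icc a b) x₀) (ha : deriv w a = 0) (hb : deriv w b = 0) :
    deriv w x₀ = 0 := by
  rcases eq_endpoints_or_mem_Ioo_of_mem_Icc hx₀ with rfl | rfl | hx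
  · exact ha
  · exact hb
  · exact (hmax.isLocalMax (Icc_mem_nhds hx.1 hx.2)).deriv_eq_zero

theorem ergodic_constant_le {a b ν ρ₁ ρ₂ : ℝ} {H : ℝ → ℝ → ℝ} {f u₁ u₂ : ℝ → ℝ}
    (hab : a < b) (hν : 0 ≤ ν) (hu₁ : ContDiff ℝ 2 u₁) (hu₂ : ContDiff ℝ 2 u₂)
    (heq₁ : ∀ x ∈ Icc a b, -ν * deriv (deriv u₁) x + H x (deriv u₁ x) + ρ₁ = f x)
    (heq₂ : ∀ x ∈ Icc a b, -ν * deriv (deriv u₂) x + H x (deriv u₂ x) + ρ₂ = f x)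
    (hN₁ : deriv u₁ a = 0 ∧ deriv u₁ b = 0) (hN₂ : deriv u₂ a = 0 ∧ deriv u₂ b = 0) :
    ρ₁ ≤ ρ₂ := by
  have hderiv : deriv (u₁ - u₂) = deriv u₁ - deriv u₂ := funext fun x =>
    deriv_sub (hu₁.differentiable two_ne_zero x) (hu₂.differentiable two_ne_zero x)
  have hderiv₂ : deriv (deriv (u₁ - u₂)) = deriv (deriv u₁) - deriv (deriv u₂) := by
    rw [hderiv]
    exact funext fun x =>
      deriv_sub (hu₁.differentiable_deriv_two x) (hu₂.differentiable_deriv_two x)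
  obtain ⟨x₀, hx₀, hmax⟩ := isCompact_Icc.exists_isMaxOn (nonempty_Icc.2 hab.le)
    (hu₁.continuous.sub hu₂.continuous).continuousOn
  have hd : deriv (u₁ - u₂) x₀ = 0 := deriv_eq_zero_of_isMaxOn_Icc hx₀ hmax
    (by simp [hderiv, hN₁.1, hN₂.1]) (by simp [hderiv, hN₁.2, hN₂.2])
  have hdd := deriv_deriv_nonpos_of_isMaxOn hmax (uniqueDiffOn_Icc hab x₀ hx₀).accPt
    (.of_forall ((hu₁.sub hu₂).differentiable two_ne_zero)) hd
  rw [hderiv, Pi.sub_apply, sub_eq_zero] at hd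
  rw [hderiv₂, Pi.sub_apply, sub_nonpos] at hdd
  have e₁ := heq₁ x₀ hx₀
  rw [hd] at e₁
  nlinarith [heq₂ x₀ hx₀, mul_le_mul_of_nonneg_left hdd hν]

theorem stmt_6_general (L ν ρ1 ρ2 : ℝ) (hL : 0 < L) (hν : 0 < ν)
    (H : ℝ → ℝ → ℝ)
    (f : ℝ → ℝ)
    (u1 u2 : ℝ → ℝ) (hu1 : ContDiff ℝ 2 u1) (hu2 : ContDiff ℝ 2 u2)
    (heq1 : ∀ x ∈ Icc (0:ℝ) L,
      -ν * deriv (deriv u1) x + H x (deriv u1 x) + ρ1 = f x)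
    (heq2 : ∀ x ∈ Icc (0:ℝ) L,
      -ν * deriv (deriv u2) x + H x (deriv u2 x) + ρ2 = f x)
    (hN1 : deriv u1 0 = 0 ∧ deriv u1 L = 0)
    (hN2 : deriv u2 0 = 0 ∧ deriv u2 L = 0) :
    ρ1 = ρ2 :=
  le_antisymm (ergodic_constant_le hL hν.le hu1 hu2 heq1 heq2 hN1 hN2)
    (ergodic_constant_le hL hν.le hu2 hu1 heq2 heq1 hN2 hN1)

/-- Uniqueness of the ergodic constant: two C² solutions of
`-ν u'' + H(x,u') + ρ = f` on `[0,L]` with Neumann conditions have the same `ρ`. -/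
theorem stmt_6 (L ν ρ1 ρ2 : ℝ) (hL : 0 < L) (hν : 0 < ν)
    (H : ℝ → ℝ → ℝ) (hHcont : Continuous fun p : ℝ × ℝ => H p.1 p.2)
    (f : ℝ → ℝ) (hf : Continuous f)
    (u1 u2 : ℝ → ℝ) (hu1 : ContDiff ℝ 2 u1) (hu2 : ContDiff ℝ 2 u2)
    (heq1 : ∀ x ∈ Icc (0:ℝ) L,
      -ν * deriv (deriv u1) x + H x (deriv u1 x) + ρ1 = f x)
    (heq2 : ∀ x ∈ Icc (0:ℝ) L,
      -ν * deriv (deriv u2) x + H x (deriv u2 x) + ρ2 = f x)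
    (hN1 : deriv u1 0 = 0 ∧ deriv u1 L = 0)
    (hN2 : deriv u2 0 = 0 ∧ deriv u2 L = 0) :
    ρ1 = ρ2 :=
  stmt_6_general L ν ρ1 ρ2 hL hν H f u1 u2 hu1 hu2 heq1 heq2 hN1 hN2
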